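/- arXiv:1808.00851 — 2 statements merged into one kernel-verified Lean document; each statement's English description precedes it below -/
import Mathlib

section
/- Let 0 < ζ < 1 and let H be a graph that has no ζ-sparse cut. Then for every set R ⊆ V(H) with |R| ≤ (ζ/6)·|V(H)| and R ≠ V(H), the induced subgraph H − R on V(H) \ R is connected. -/
open SimpleGraph

/-- The number of edges of `G` with one end in `X` and one end in `Y`
(intended for disjoint `X`, `Y`). -/
noncomputable def ebtw {V : Type*} (G : SimpleGraph V) (X Y : Set V) : ℕ :=
  {e : Sym2 V | e ∈ G.edgeSet ∧ ∃ x ∈ X, ∃ y ∈ Y, e = s(x, y)}.ncard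

/-- `A` has an `α`-sparse cut in `G`. -/
def HasSparseCut {V : Type*} (G : SimpleGraph V) (A : Set V) (α : ℝ) : Prop :=
  ∃ X Y : Set V, X ∪ Y = A ∧ Disjoint X Y ∧ X.Nonempty ∧ Y.Nonempty ∧
    (ebtw G X Y : ℝ) ≤ α * X.ncard * Y.ncard

/-!
If `H − R` splits into parts `A` and `B` with no edges between them and `|B| ≤ |A|`, consider the
cut `{A ∪ R, B}` of `H`. Only edges between `R` and `B` cross it, so it has at most `|R| |B|`
crossing edges. Since `|V| ≤ 2 |A ∪ R|`, the bound `|R| ≤ ζ/6 · |V|` gives `|R| ≤ ζ |A ∪ R|`,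
so this cut is `ζ`-sparse.
-/

lemma exists_separation_of_not_connected_induce {V : Type*} {G : SimpleGraph V} {S : Set V}
    (hS : S.Nonempty) (h : ¬ (G.induce S).Connected) :
    ∃ A B : Set V, A ∪ B = S ∧ Disjoint A B ∧ A.Nonempty ∧ B.Nonempty ∧
      ∀ a ∈ A, ∀ b ∈ B, ¬ G.Adj a b := by
  have : Nonempty S := hS.to_subtype
  obtain ⟨u, w, huw⟩ : ∃ u w : S, ¬ (G.induce S).Reachable u w := by
    simpa [connected_iff, Preconnected, this] using h
  let A : Set V := {x | ∃ hx : x ∈ S, (G.induce S).Reachable u ⟨x, hx⟩}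
  refine ⟨A, S \ A, Set.union_sdiff_cancel fun x hx => hx.1, Set.disjoint_sdiff_right,
    ⟨u, u.2, .rfl⟩, ⟨w, w.2, fun hw => huw hw.2⟩, ?_⟩
  rintro a ⟨ha, hua⟩ b ⟨hb, hbA⟩ hab
  exact hbA ⟨hb, hua.trans (Adj.reachable (G := G.induce S) hab)⟩

section ebtw

variable {V : Type*} [Finite V] (G : SimpleGraph V)

lemma ebtw_le_ncard_mul_ncard (X Y : Set V) : ebtw G X Y ≤ X.ncard * Y.ncard :=
  calc ebtw G X Y ≤ ((fun p : V × V => s(p.1, p.2)) '' (X ×ˢ Y)).ncard := by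
        refine Set.ncard_le_ncard ?_ (Set.toFinite _)
        rintro e ⟨-, x, hx, y, hy, rfl⟩
        exact ⟨(x, y), ⟨hx, hy⟩, rfl⟩
    _ ≤ (X ×ˢ Y).ncard := Set.ncard_image_le (Set.toFinite _)
    _ = X.ncard * Y.ncard := Set.ncard_prod

lemma ebtw_union_left_le_of_forall_not_adj {A R Y : Set V}
    (hsep : ∀ a ∈ A, ∀ y ∈ Y, ¬ G.Adj a y) : ebtw G (A ∪ R) Y ≤ ebtw G R Y := by
  refine Set.ncard_le_ncard ?_ (Set.toFinite _)
  rintro e ⟨he, x, hx | hx, y, hy, rfl⟩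
  · exact (hsep x hx y hy (G.mem_edgeSet.1 he)).elim
  · exact ⟨he, x, hx, y, hy, rfl⟩

lemma hasSparseCut_univ_of_separation {ζ : ℝ} {R A B : Set V} (hAB : A ∪ B = Rᶜ)
    (hdisj : Disjoint A B) (hA : A.Nonempty) (hB : B.Nonempty)
    (hsep : ∀ a ∈ A, ∀ b ∈ B, ¬ G.Adj a b) (hR : (R.ncard : ℝ) ≤ ζ * (A ∪ R).ncard) :
    HasSparseCut G Set.univ ζ := by
  have hBR : Disjoint B R := Set.subset_compl_iff_disjoint_right.1 (hAB ▸ Set.subset_union_right)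
  refine ⟨A ∪ R, B, by rw [Set.union_right_comm, hAB, Set.compl_union_self],
    Set.disjoint_union_left.2 ⟨hdisj, hBR.symm⟩, hA.inl, hB, ?_⟩
  calc (ebtw G (A ∪ R) B : ℝ) ≤ R.ncard * B.ncard := by
        exact_mod_cast (ebtw_union_left_le_of_forall_not_adj G hsep).trans
          (ebtw_le_ncard_mul_ncard G R B)
    _ ≤ ζ * (A ∪ R).ncard * B.ncard := by gcongr

end ebtw

/-- If `H` has no `ζ`-sparse cut and `R` is a small proper subset of the vertices,
then `H − R` is connected. -/
theorem connected_after_removal :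
    ∀ ζ : ℝ, 0 < ζ → ζ < 1 →
    ∀ (V : Type) [Fintype V] (H : SimpleGraph V),
      ¬ HasSparseCut H Set.univ ζ →
    ∀ R : Set V, (R.ncard : ℝ) ≤ ζ / 6 * Fintype.card V → R ≠ Set.univ →
      (H.induce Rᶜ).Connected := by
  intro ζ hζ _ V _ H hno R hR hRne
  by_contra hdisconn
  obtain ⟨A, B, hAB, hdisj, hA, hB, hsep⟩ :=
    exists_separation_of_not_connected_induce (Set.nonempty_compl.2 hRne) hdisconn
  wlog hBA : B.ncard ≤ A.ncard generalizing A B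
  · exact this B A (by rw [Set.union_comm, hAB]) hdisj.symm hB hA
      (fun b hb a ha hab => hsep a ha b hb hab.symm) (le_of_not_ge hBA)
  refine hno (hasSparseCut_univ_of_separation H hAB hdisj hA hB hsep ?_)
  have hAR : Disjoint A R := Set.subset_compl_iff_disjoint_right.1 (hAB ▸ Set.subset_union_left)
  have hcard : Fintype.card V = A.ncard + B.ncard + R.ncard := by
    rw [← Nat.card_eq_fintype_card, ← Set.ncard_add_ncard_compl R, ← hAB,
      Set.ncard_union_eq hdisj]
    ring
  have hBA' : (B.ncard : ℝ) ≤ A.ncard := by exact_mod_cast hBA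
  rw [hcard] at hR
  rw [Set.ncard_union_eq hAR]
  push_cast at hR ⊢
  linarith [mul_nonneg hζ.le (Nat.cast_nonneg (α := ℝ) A.ncard),
    mul_nonneg hζ.le (Nat.cast_nonneg (α := ℝ) R.ncard), mul_le_mul_of_nonneg_left hBA' hζ.le]
end

section
/- Let G be a graph on n vertices whose vertex set is partitioned into clusters A₁, …, A_r, each designated either 'near-bipartite', with a prescribed partition {X_i, Y_i} of A_i that maximises the number of edges of G with one end in X_i and one end in Y_i, or 'far-from-bipartite'. Suppose each induced subgraph G[A_i] has minimum degree at least δ·n. Let Ḡ be the lift (bipartite double cover) of G with clumps defined from this cluster structure. Then for every clump Ā, the induced subgraph Ḡ[Ā] has minimum degree at least δ·n/2. In particular, if G is c·n-regular, every vertex of Ā has at most (c − δ/2)·n neighbours in V(Ḡ) \ Ā. -/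
/-!
In a maximum cut `{X, Y}` of a cluster `A`, moving a vertex `x ∈ X` to `Y` changes the cut by
`d_X(x) - d_Y(x)`, so maximality gives `d_Y(x) ≥ d_A(x) / 2 ≥ δ n / 2`. In the lift, the
neighbours of `x⁽¹⁾` inside its clump are the copies in `V⁽²⁾` of its neighbours in the
opposite part (or in the whole cluster, for a far-from-bipartite one), so there are at least
`δ n / 2` of them; in a `c n`-regular graph at most `c n - δ n / 2` neighbours remain outside.
-/

open SimpleGraph

/-- The lift (bipartite double cover) of `G`. -/
def lift {V : Type*} (G : SimpleGraph V) : SimpleGraph (V ⊕ V) :=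
  SimpleGraph.fromRel fun x y =>
    ∃ u v : V, x = Sum.inl u ∧ y = Sum.inr v ∧ G.Adj u v

/-- The clumps of the lift of `G`, given clusters `A i` with designation `near i`
(in which case `A i` is split as `X i ∪ Y i`). -/
def clumps {V : Type*} {r : ℕ} (A X Y : Fin r → Set V) (near : Fin r → Prop) :
    Set (Set (V ⊕ V)) :=
  {S | ∃ i,
    (near i ∧ (S = Sum.inl '' X i ∪ Sum.inr '' Y i ∨
               S = Sum.inl '' Y i ∪ Sum.inr '' X i)) ∨
    (¬ near i ∧ S = Sum.inl '' A i ∪ Sum.inr '' A i)}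

section Lift

variable {V : Type*} (G : SimpleGraph V)

lemma lift_adj_inl_iff (a : V) (u : V ⊕ V) :
    (lift G).Adj (Sum.inl a) u ↔ ∃ w, u = Sum.inr w ∧ G.Adj a w := by
  constructor
  · rintro ⟨-, ⟨_, w, h, rfl, hw⟩ | ⟨_, _, -, h, -⟩⟩
    · exact ⟨w, rfl, Sum.inl.inj h ▸ hw⟩
    · exact absurd h Sum.inl_ne_inr
  · rintro ⟨w, rfl, hw⟩
    exact ⟨Sum.inl_ne_inr, Or.inl ⟨a, w, rfl, rfl, hw⟩⟩

lemma lift_adj_inr_iff (a : V) (u : V ⊕ V) :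
    (lift G).Adj (Sum.inr a) u ↔ ∃ w, u = Sum.inl w ∧ G.Adj a w := by
  rw [(lift G).adj_comm]
  constructor
  · rintro ⟨-, ⟨w, _, rfl, h, hw⟩ | ⟨_, _, h, -, -⟩⟩
    · exact ⟨w, rfl, (Sum.inr.inj h ▸ hw).symm⟩
    · exact absurd h Sum.inr_ne_inl
  · rintro ⟨w, rfl, hw⟩
    exact ⟨Sum.inl_ne_inr, Or.inl ⟨w, a, rfl, rfl, hw.symm⟩⟩

lemma ncard_lift_adj_inl (p : V ⊕ V → Prop) (a : V) :
    {u | p u ∧ (lift G).Adj (Sum.inl a) u}.ncard = {w | p (Sum.inr w) ∧ G.Adj a w}.ncard := by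
  have : {u | p u ∧ (lift G).Adj (Sum.inl a) u} = Sum.inr '' {w | p (Sum.inr w) ∧ G.Adj a w} := by
    ext u
    simp only [lift_adj_inl_iff, Set.mem_ofPred_eq, Set.mem_image]
    constructor
    · rintro ⟨hp, w, rfl, hw⟩
      exact ⟨w, ⟨hp, hw⟩, rfl⟩
    · rintro ⟨w, ⟨hp, hw⟩, rfl⟩
      exact ⟨hp, w, rfl, hw⟩
  rw [this, Set.ncard_image_of_injective _ Sum.inr_injective]

lemma ncard_lift_adj_inr (p : V ⊕ V → Prop) (a : V) :
    {u | p u ∧ (lift G).Adj (Sum.inr a) u}.ncard = {w | p (Sum.inl w) ∧ G.Adj a w}.ncard := by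
  have : {u | p u ∧ (lift G).Adj (Sum.inr a) u} = Sum.inl '' {w | p (Sum.inl w) ∧ G.Adj a w} := by
    ext u
    simp only [lift_adj_inr_iff, Set.mem_ofPred_eq, Set.mem_image]
    constructor
    · rintro ⟨hp, w, rfl, hw⟩
      exact ⟨w, ⟨hp, hw⟩, rfl⟩
    · rintro ⟨w, ⟨hp, hw⟩, rfl⟩
      exact ⟨hp, w, rfl, hw⟩
  rw [this, Set.ncard_image_of_injective _ Sum.inl_injective]

lemma ncard_lift_adj (v : V ⊕ V) :
    {u | (lift G).Adj v u}.ncard = {w | G.Adj (Sum.elim id id v) w}.ncard := by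
  cases v with
  | inl a => simpa using ncard_lift_adj_inl G (fun _ => True) a
  | inr a => simpa using ncard_lift_adj_inr G (fun _ => True) a

end Lift

section MaxCut

variable {V : Type*} (G : SimpleGraph V)

def IsMaxCut (A X Y : Set V) : Prop :=
  X ∪ Y = A ∧ Disjoint X Y ∧
    ∀ X' Y' : Set V, X' ∪ Y' = A → Disjoint X' Y' → ebtw G X' Y' ≤ ebtw G X Y

lemma ebtw_comm (X Y : Set V) : ebtw G X Y = ebtw G Y X := by
  unfold ebtw
  congr 1
  ext e
  constructor <;>
  · rintro ⟨he, a, ha, b, hb, rfl⟩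
    exact ⟨he, b, hb, a, ha, Sym2.eq_swap⟩

lemma ebtw_insert_left [Finite V] {X Y : Set V} {x : V} (hxX : x ∉ X) (hxY : x ∉ Y) :
    ebtw G (insert x X) Y = ebtw G X Y + {w | w ∈ Y ∧ G.Adj x w}.ncard := by
  have hsplit : {e : Sym2 V | e ∈ G.edgeSet ∧ ∃ a ∈ insert x X, ∃ b ∈ Y, e = s(a, b)} =
      {e | e ∈ G.edgeSet ∧ ∃ a ∈ X, ∃ b ∈ Y, e = s(a, b)} ∪
        (fun w => s(x, w)) '' {w | w ∈ Y ∧ G.Adj x w} := by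
    ext e
    constructor
    · rintro ⟨he, a, rfl | ha, b, hb, rfl⟩
      · exact Or.inr ⟨b, ⟨hb, he⟩, rfl⟩
      · exact Or.inl ⟨he, a, ha, b, hb, rfl⟩
    · rintro (⟨he, a, ha, b, hb, rfl⟩ | ⟨w, ⟨hw, hxw⟩, rfl⟩)
      · exact ⟨he, a, Or.inr ha, b, hb, rfl⟩
      · exact ⟨hxw, x, Or.inl rfl, w, hw, rfl⟩
  have hdisj : Disjoint {e : Sym2 V | e ∈ G.edgeSet ∧ ∃ a ∈ X, ∃ b ∈ Y, e = s(a, b)}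
      ((fun w => s(x, w)) '' {w | w ∈ Y ∧ G.Adj x w}) := by
    rw [Set.disjoint_left]
    rintro _ ⟨-, a, ha, b, hb, rfl⟩ ⟨w, -, hw⟩
    rcases Sym2.mem_iff.mp (hw ▸ Sym2.mem_mk_left x w : x ∈ s(a, b)) with rfl | rfl
    · exact hxX ha
    · exact hxY hb
  rw [ebtw, hsplit, Set.ncard_union_eq hdisj,
    Set.ncard_image_of_injective _ fun _ _ => Sym2.congr_right.mp, ← ebtw]

variable {G}

lemma IsMaxCut.symm {A X Y : Set V} (h : IsMaxCut G A X Y) : IsMaxCut G A Y X := by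
  obtain ⟨hcover, hdisj, hmax⟩ := h
  refine ⟨Set.union_comm Y X ▸ hcover, hdisj.symm, fun X' Y' h₁ h₂ => ?_⟩
  rw [ebtw_comm G Y X]
  exact hmax X' Y' h₁ h₂

lemma IsMaxCut.ncard_adj_le [Finite V] {A X Y : Set V} (h : IsMaxCut G A X Y) {x : V}
    (hx : x ∈ X) : {w | w ∈ X ∧ G.Adj x w}.ncard ≤ {w | w ∈ Y ∧ G.Adj x w}.ncard := by
  obtain ⟨hcover, hdisj, hmax⟩ := h
  have hxY : x ∉ Y := hdisj.notMem_of_mem_left hx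
  set X₀ := X \ {x}
  have hxX₀ : x ∉ X₀ := fun h => h.2 rfl
  have hX : insert x X₀ = X := Set.insert_sdiff_self_of_mem hx
  have hdeg₀ : {w | w ∈ X₀ ∧ G.Adj x w} = {w | w ∈ X ∧ G.Adj x w} := by
    ext w
    exact ⟨fun h => ⟨h.1.1, h.2⟩, fun h => ⟨⟨h.1, (G.ne_of_adj h.2).symm⟩, h.2⟩⟩
  have hbefore : ebtw G X Y = ebtw G X₀ Y + {w | w ∈ Y ∧ G.Adj x w}.ncard := by
    rw [← ebtw_insert_left G hxX₀ hxY, hX]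
  have hafter : ebtw G X₀ (insert x Y) = ebtw G X₀ Y + {w | w ∈ X ∧ G.Adj x w}.ncard := by
    rw [ebtw_comm, ebtw_insert_left G hxY hxX₀, ebtw_comm, hdeg₀]
  have hle : ebtw G X₀ (insert x Y) ≤ ebtw G X Y := by
    refine hmax _ _ ?_ ?_
    · rw [← hcover, ← hX, Set.union_insert, Set.insert_union]
    · exact Set.disjoint_insert_right.mpr ⟨hxX₀, hdisj.mono_left Set.sdiff_subset⟩
  omega

lemma IsMaxCut.half_le_ncard_adj [Finite V] {A X Y : Set V} (h : IsMaxCut G A X Y) {x : V}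
    (hx : x ∈ X) {d : ℝ} (hd : d ≤ ({u | u ∈ A ∧ G.Adj x u}.ncard : ℝ)) :
    d / 2 ≤ ({w | w ∈ Y ∧ G.Adj x w}.ncard : ℝ) := by
  have hsplit : {u | u ∈ A ∧ G.Adj x u}.ncard =
      {w | w ∈ X ∧ G.Adj x w}.ncard + {w | w ∈ Y ∧ G.Adj x w}.ncard := by
    rw [← h.1, ← Set.ncard_union_eq (h.2.1.mono (fun _ hu => hu.1) (fun _ hu => hu.1))]
    exact congrArg Set.ncard (Set.union_inter_distrib_right X Y {u | G.Adj x u})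
  have hle : ({w | w ∈ X ∧ G.Adj x w}.ncard : ℝ) ≤ {w | w ∈ Y ∧ G.Adj x w}.ncard := by
    exact_mod_cast h.ncard_adj_le hx
  rw [hsplit, Nat.cast_add] at hd
  linarith

end MaxCut

section Clump

variable {V : Type*} {G : SimpleGraph V}

lemma le_ncard_lift_adj_of_cross {P Q : Set V} {d : ℝ}
    (hP : ∀ a ∈ P, d ≤ ({w | w ∈ Q ∧ G.Adj a w}.ncard : ℝ))
    (hQ : ∀ a ∈ Q, d ≤ ({w | w ∈ P ∧ G.Adj a w}.ncard : ℝ))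
    {v : V ⊕ V} (hv : v ∈ Sum.inl '' P ∪ Sum.inr '' Q) :
    d ≤ ({u | u ∈ Sum.inl '' P ∪ Sum.inr '' Q ∧ (lift G).Adj v u}.ncard : ℝ) := by
  rcases hv with ⟨a, ha, rfl⟩ | ⟨a, ha, rfl⟩
  · rw [ncard_lift_adj_inl]
    simpa using hP a ha
  · rw [ncard_lift_adj_inr]
    simpa using hQ a ha

lemma ncard_lift_adj_notMem_le [Finite V] {k d : ℝ}
    (hreg : ∀ w : V, ({u | G.Adj w u}.ncard : ℝ) = k) (S : Set (V ⊕ V)) (v : V ⊕ V)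
    (hd : d ≤ ({u | u ∈ S ∧ (lift G).Adj v u}.ncard : ℝ)) :
    ({u | u ∉ S ∧ (lift G).Adj v u}.ncard : ℝ) ≤ k - d := by
  have hsplit := Set.ncard_inter_add_ncard_sdiff_eq_ncard {u | (lift G).Adj v u} S
  rw [Set.inter_comm, Set.sdiff_eq, Set.inter_comm _ Sᶜ, ncard_lift_adj] at hsplit
  have hsplitℝ : ({u | u ∈ S ∧ (lift G).Adj v u}.ncard : ℝ) +
      {u | u ∉ S ∧ (lift G).Adj v u}.ncard = k := by
    rw [← hreg (Sum.elim id id v)]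
    exact_mod_cast hsplit
  linarith

end Clump

/-- **Minimum degree inside clumps** (Observation 4.2): every clump induces a subgraph of
the lift of minimum degree at least `δ n / 2`; in particular, in a `c n`-regular graph
every vertex of a clump has at most `(c − δ/2) n` neighbours outside its clump. -/
theorem clump_min_degree :
    ∀ (V : Type) [Fintype V] (G : SimpleGraph V) (n r : ℕ) (δ : ℝ),
      Fintype.card V = n →
    ∀ (A X Y : Fin r → Set V) (near : Fin r → Prop),
      Pairwise (fun i j => Disjoint (A i) (A j)) →
      (⋃ i, A i) = Set.univ →
      (∀ i, ∀ v ∈ A i, δ * n ≤ ({u | u ∈ A i ∧ G.Adj v u}.ncard : ℝ)) →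
      (∀ i, near i → X i ∪ Y i = A i ∧ Disjoint (X i) (Y i) ∧
        ∀ X' Y' : Set V, X' ∪ Y' = A i → Disjoint X' Y' →
          ebtw G X' Y' ≤ ebtw G (X i) (Y i)) →
    ∀ S ∈ clumps A X Y near, ∀ v ∈ S,
      δ * n / 2 ≤ ({u | u ∈ S ∧ (lift G).Adj v u}.ncard : ℝ) ∧
      ∀ c : ℝ, (∀ w : V, ({u | G.Adj w u}.ncard : ℝ) = c * n) →
        ({u | u ∉ S ∧ (lift G).Adj v u}.ncard : ℝ) ≤ (c - δ / 2) * n := by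
  intro V _ G n r δ _ A X Y near _ _ hdeg hnear S hS v hv
  have hhalf : ∀ i {P Q : Set V}, IsMaxCut G (A i) P Q →
      ∀ a ∈ P, δ * n / 2 ≤ ({w | w ∈ Q ∧ G.Adj a w}.ncard : ℝ) :=
    fun i _ _ hcut a ha => hcut.half_le_ncard_adj ha (hdeg i a (hcut.1 ▸ Or.inl ha))
  obtain ⟨P, Q, rfl, hP, hQ⟩ : ∃ P Q : Set V, S = Sum.inl '' P ∪ Sum.inr '' Q ∧
      (∀ a ∈ P, δ * n / 2 ≤ ({w | w ∈ Q ∧ G.Adj a w}.ncard : ℝ)) ∧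
      (∀ a ∈ Q, δ * n / 2 ≤ ({w | w ∈ P ∧ G.Adj a w}.ncard : ℝ)) := by
    obtain ⟨i, ⟨hi, hS⟩ | ⟨-, rfl⟩⟩ := hS
    · have hcut : IsMaxCut G (A i) (X i) (Y i) := hnear i hi
      rcases hS with rfl | rfl
      · exact ⟨_, _, rfl, hhalf i hcut, hhalf i hcut.symm⟩
      · exact ⟨_, _, rfl, hhalf i hcut.symm, hhalf i hcut⟩
    · have hA : ∀ a ∈ A i, δ * n / 2 ≤ ({w | w ∈ A i ∧ G.Adj a w}.ncard : ℝ) := fun a ha => by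
        linarith [hdeg i a ha, (Nat.cast_nonneg _ : (0 : ℝ) ≤ {w | w ∈ A i ∧ G.Adj a w}.ncard)]
      exact ⟨_, _, rfl, hA, hA⟩
  have hinside := le_ncard_lift_adj_of_cross hP hQ hv
  exact ⟨hinside, fun c hc => (ncard_lift_adj_notMem_le hc _ v hinside).trans_eq (by ring)⟩
end
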